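/- arXiv:2212.05252 — 5 statements merged into one kernel-verified Lean document; each statement's English description precedes it below -/
import Mathlib

section
/- For p ≥ 0, the function x ↦ e^{-x} ∑_{n=1}^∞ ( ∑_{j=0}^{n-1} (j+r)_{p,λ} ) x^n/n! has derivative equal to φ_{p,λ}^{(r)}(x), the degenerate r-Bell polynomial. -/
/-!
Differentiating the exponential generating function `S y = ∑ aₙ yⁿ/n!` termwise shifts its
coefficients, `S' y = ∑ aₙ₊₁ yⁿ/n!`, so `(e^{-y} S y)' = e^{-y} ∑ (aₙ₊₁ - aₙ) yⁿ/n!`. For the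
partial sums `aₙ = ∑_{j<n} (j+r)_{p,λ}` the difference `aₙ₊₁ - aₙ` is `(n+r)_{p,λ}`, and
the Dobinski formula for `φ_{p,λ}^{(r)}` appears. Termwise differentiation is justified because
these coefficients grow at most exponentially in `n`.
-/

/-- Generalized falling factorial `(y)_{m,λ} = y(y-λ)⋯(y-(m-1)λ)`. -/
noncomputable def degFallFact (y l : ℝ) (m : ℕ) : ℝ :=
  ∏ i ∈ Finset.range m, (y - i * l)

/-- Degenerate r-Bell polynomial via the Dobinski-like formula
`φ_{p,λ}^{(r)}(x) = e^{-x} ∑_{k≥0} (k+r)_{p,λ} x^k/k!`. -/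
noncomputable def degBell (l : ℝ) (p r : ℕ) (x : ℝ) : ℝ :=
  Real.exp (-x) * ∑' k : ℕ, degFallFact (k + r) l p * x ^ k / k.factorial

open Finset

section

variable {𝕜 : Type*} [RCLike 𝕜]

theorem summable_mul_pow_div_factorial {c : ℕ → 𝕜} {K B : ℝ} (hc : ∀ n, ‖c n‖ ≤ K * B ^ n)
    (x : 𝕜) : Summable fun n => c n * x ^ n / n.factorial := by
  refine .of_norm_bounded ((Real.summable_pow_div_factorial (B * ‖x‖)).mul_left K) fun n => ?_
  rw [norm_div, norm_mul, norm_pow, RCLike.norm_natCast, mul_pow, ← mul_div_assoc, ← mul_assoc]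
  gcongr
  exact hc n

theorem hasDerivAt_pow_succ_div_factorial (n : ℕ) (x : 𝕜) :
    HasDerivAt (fun y : 𝕜 => y ^ (n + 1) / (n + 1).factorial) (x ^ n / n.factorial) x := by
  refine ((hasDerivAt_pow (n + 1) x).div_const ((n + 1).factorial : 𝕜)).congr_deriv ?_
  have hn : ((n + 1 : ℕ) : 𝕜) ≠ 0 := Nat.cast_ne_zero.mpr n.succ_ne_zero
  rw [Nat.factorial_succ, Nat.cast_mul, Nat.add_sub_cancel]
  field_simp

theorem hasDerivAt_tsum_mul_pow_div_factorial {c : ℕ → 𝕜} {K B : ℝ}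
    (hc : ∀ n, ‖c n‖ ≤ K * B ^ n) (x : 𝕜) :
    HasDerivAt (fun y => ∑' n, c n * y ^ n / n.factorial)
      (∑' n, c (n + 1) * x ^ n / n.factorial) x := by
  have hsplit : (fun y => ∑' n, c n * y ^ n / n.factorial) =
      fun y => c 0 + ∑' n, c (n + 1) * (y ^ (n + 1) / (n + 1).factorial) := by
    funext y
    rw [(summable_mul_pow_div_factorial hc y).tsum_eq_zero_add]
    simp only [pow_zero, Nat.factorial_zero, Nat.cast_one, mul_one, div_one, mul_div_assoc]
  set R := ‖x‖ + 1
  have hbound : ∀ n, ∀ y ∈ Metric.ball (0 : 𝕜) R,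
      ‖c (n + 1) * (y ^ n / n.factorial)‖ ≤ K * B * ((B * R) ^ n / n.factorial) := by
    intro n y hy
    have hy : ‖y‖ ≤ R := (mem_ball_zero_iff.mp hy).le
    rw [norm_mul, norm_div, norm_pow, RCLike.norm_natCast]
    calc ‖c (n + 1)‖ * (‖y‖ ^ n / n.factorial) ≤ K * B ^ (n + 1) * (R ^ n / n.factorial) :=
          mul_le_mul (hc _) (by gcongr) (by positivity) ((norm_nonneg _).trans (hc _))
      _ = K * B * ((B * R) ^ n / n.factorial) := by rw [mul_pow, pow_succ]; ring
  rw [hsplit]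
  refine HasDerivAt.const_add _ (hasDerivAt_tsum_of_isPreconnected
    ((Real.summable_pow_div_factorial (B * R)).mul_left (K * B)) Metric.isOpen_ball
    (convex_ball _ _).isPreconnected
    (fun n y _ => (hasDerivAt_pow_succ_div_factorial n y).const_mul _)
    hbound (Metric.mem_ball_self (by positivity)) ?_ ?_) |>.congr_deriv ?_
  · simpa only [mul_div_assoc] using
      (summable_nat_add_iff 1).mpr (summable_mul_pow_div_factorial hc 0)
  · simp [R]
  · simp only [mul_div_assoc]

end

theorem hasDerivAt_exp_neg_mul_tsum_mul_pow_div_factorial {c : ℕ → ℝ} {K B : ℝ}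
    (hc : ∀ n, ‖c n‖ ≤ K * B ^ n) (x : ℝ) :
    HasDerivAt (fun y => Real.exp (-y) * ∑' n, c n * y ^ n / n.factorial)
      (Real.exp (-x) * ∑' n, (c (n + 1) - c n) * x ^ n / n.factorial) x := by
  have hc_succ : ∀ n, ‖c (n + 1)‖ ≤ K * B * B ^ n := fun n => by
    rw [mul_assoc, ← pow_succ']; exact hc _
  refine ((hasDerivAt_neg x).exp.mul (hasDerivAt_tsum_mul_pow_div_factorial hc x)).congr_deriv ?_
  simp only [sub_mul, sub_div]
  rw [Summable.tsum_sub (summable_mul_pow_div_factorial hc_succ x)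
    (summable_mul_pow_div_factorial hc x)]
  ring

theorem norm_sum_range_le_mul_two_mul_pow {E : Type*} [SeminormedAddCommGroup E] {b : ℕ → E}
    {K B : ℝ} (hb : ∀ j, ‖b j‖ ≤ K * B ^ j) (hB : 1 ≤ B) (n : ℕ) :
    ‖∑ j ∈ range n, b j‖ ≤ K * (2 * B) ^ n := by
  have hK : 0 ≤ K := by simpa using (norm_nonneg _).trans (hb 0)
  have hn : (n : ℝ) ≤ 2 ^ n := by exact_mod_cast n.lt_two_pow_self.le
  calc ‖∑ j ∈ range n, b j‖ ≤ ∑ j ∈ range n, K * B ^ n :=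
        (norm_sum_le _ _).trans <| sum_le_sum fun j hj =>
          (hb j).trans <|
            mul_le_mul_of_nonneg_left (pow_le_pow_right₀ hB (mem_range.mp hj).le) hK
    _ = n * (K * B ^ n) := by rw [sum_const, card_range, nsmul_eq_mul]
    _ ≤ 2 ^ n * (K * B ^ n) := by gcongr
    _ = K * (2 * B) ^ n := by ring

theorem abs_degFallFact_le (y l : ℝ) (m : ℕ) : |degFallFact y l m| ≤ (|y| + m * |l|) ^ m := by
  have hfactor : ∀ i ∈ range m, |y - i * l| ≤ |y| + m * |l| := fun i hi => by
    have hi : (i : ℝ) ≤ m := by exact_mod_cast (mem_range.mp hi).le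
    calc |y - i * l| ≤ |y| + i * |l| := by
          simpa [abs_mul] using abs_sub y (i * l)
      _ ≤ |y| + m * |l| := by gcongr
  calc |degFallFact y l m| = ∏ i ∈ range m, |y - i * l| := abs_prod _ _
    _ ≤ ∏ _i ∈ range m, (|y| + m * |l|) := prod_le_prod (fun _ _ => abs_nonneg _) hfactor
    _ = (|y| + m * |l|) ^ m := by rw [prod_const, card_range]

theorem abs_degFallFact_natCast_add_le (l : ℝ) (p r j : ℕ) :
    |degFallFact (j + r) l p| ≤ (1 + r + p * |l|) ^ p * (2 ^ p) ^ j := by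
  have hj : (j : ℝ) + 1 ≤ 2 ^ j := by exact_mod_cast j.lt_two_pow_self
  refine (abs_degFallFact_le _ l p).trans ?_
  rw [← pow_mul, mul_comm p j, pow_mul, ← mul_pow]
  gcongr
  rw [abs_of_nonneg (by positivity)]
  nlinarith [abs_nonneg l, (Nat.cast_nonneg p : (0 : ℝ) ≤ p), (Nat.cast_nonneg r : (0 : ℝ) ≤ r),
    mul_nonneg (Nat.cast_nonneg p : (0 : ℝ) ≤ p) (abs_nonneg l)]

/-- `d/dx (e^{-x} ∑_{n≥1} (∑_{j=0}^{n-1} (j+r)_{p,λ}) x^n/n!) = φ_{p,λ}^{(r)}(x)`. -/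
theorem deriv_exp_neg_mul_y (l : ℝ) (p r : ℕ) (x : ℝ) :
    HasDerivAt (fun y : ℝ => Real.exp (-y) *
      ∑' n : ℕ, (∑ j ∈ Finset.range n, degFallFact (j + r) l p) * y ^ n / n.factorial)
      (degBell l p r x) x := by
  have hcoeff := norm_sum_range_le_mul_two_mul_pow
    (fun j => (Real.norm_eq_abs _).trans_le (abs_degFallFact_natCast_add_le l p r j))
    (one_le_pow₀ one_le_two)
  refine (hasDerivAt_exp_neg_mul_tsum_mul_pow_div_factorial hcoeff x).congr_deriv ?_
  simp only [sum_range_succ, add_sub_cancel_left, degBell]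
end

section
/- For p ≥ 0 and all real x, ∑_{n=0}^∞ ( ∑_{j=0}^{n} (j+r)_{p,λ} ) x^n/n! = e^x ∑_{k=0}^p {p+r brace k+r}_{r,λ} ( x^k + x^{k+1}/(k+1) ). -/
/-!
Expanding `(j + r)_{p,λ}` in falling factorials `(j)_k = j.descFactorial k` reduces the claim to
the hockey-stick identity `∑_{j ≤ n} (j)_k = (n + 1)_{k + 1} / (k + 1)` and to
`∑_n (n)_k xⁿ / n! = xᵏ eˣ` (shift the exponential series by `k`). The Pascal rule
`(n + 1)_{k + 1} = (n)_{k + 1} + (k + 1) (n)_k` turns the resulting series into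
`(x^{k+1} + (k + 1) xᵏ) eˣ`.
-/

open Finset Nat

theorem Nat.succ_descFactorial_succ_eq_add (n k : ℕ) :
    (n + 1).descFactorial (k + 1) = n.descFactorial (k + 1) + (k + 1) * n.descFactorial k := by
  simp only [descFactorial_eq_factorial_mul_choose, choose_succ_succ', factorial_succ]
  ring

theorem Nat.succ_mul_sum_range_descFactorial (n k : ℕ) :
    (k + 1) * ∑ j ∈ range n, j.descFactorial k = n.descFactorial (k + 1) := by
  induction n with
  | zero => simp
  | succ n ih => rw [sum_range_succ, mul_add, ih, succ_descFactorial_succ_eq_add]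

theorem Real.hasSum_descFactorial_mul_pow_div_factorial (k : ℕ) (x : ℝ) :
    HasSum (fun n ↦ (n.descFactorial k : ℝ) * x ^ n / n !) (x ^ k * Real.exp x) := by
  rw [← hasSum_nat_add_iff' k, sum_eq_zero fun i hi ↦ by
    simp [descFactorial_of_lt (mem_range.1 hi)], sub_zero]
  have hshift (n : ℕ) : ((n + k).descFactorial k : ℝ) * x ^ (n + k) / (n + k)! =
      x ^ k * (x ^ n / n !) := by
    rw [← factorial_mul_descFactorial (le_add_left k n), Nat.add_sub_cancel, pow_add]
    push_cast
    field_simp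
  simp only [hshift]
  exact (Real.exp_eq_exp_ℝ ▸ NormedSpace.expSeries_div_hasSum_exp x).mul_left (x ^ k)

theorem Real.hasSum_succ_descFactorial_succ_mul_pow_div_factorial (k : ℕ) (x : ℝ) :
    HasSum (fun n ↦ ((n + 1).descFactorial (k + 1) : ℝ) * x ^ n / n !)
      ((x ^ (k + 1) + (k + 1) * x ^ k) * Real.exp x) := by
  have := (hasSum_descFactorial_mul_pow_div_factorial (k + 1) x).add
    ((hasSum_descFactorial_mul_pow_div_factorial k x).mul_left ((k : ℝ) + 1))
  convert this using 1
  · ext n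
    rw [succ_descFactorial_succ_eq_add]
    push_cast
    ring
  · ring

/-- `∑_{n≥0} (∑_{j=0}^n (j+r)_{p,λ}) x^n/n! = e^x ∑_{k=0}^p {p+r brace k+r}_{r,λ} (x^k + x^{k+1}/(k+1))`,
where `S` are the degenerate r-Stirling numbers of the second kind. -/
theorem tsum_partial_sums_eq (l : ℝ) (p r : ℕ) (S : ℕ → ℕ → ℝ)
    (hS : ∀ (m : ℕ) (x : ℝ), degFallFact (x + r) l m =
      ∑ k ∈ Finset.range (m + 1), S m k * ∏ i ∈ Finset.range k, (x - i))
    (x : ℝ) :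
    ∑' n : ℕ, (∑ j ∈ Finset.range (n + 1), degFallFact (j + r) l p) * x ^ n / n.factorial =
      Real.exp x * ∑ k ∈ Finset.range (p + 1), S p k * (x ^ k + x ^ (k + 1) / (k + 1)) := by
  have hpartial (n : ℕ) : (∑ j ∈ range (n + 1), degFallFact (j + r) l p) * x ^ n / n ! =
      ∑ k ∈ range (p + 1), S p k / (k + 1) *
        (((n + 1).descFactorial (k + 1) : ℝ) * x ^ n / n !) := by
    simp only [hS, prod_range_natCast_sub, ← descFactorial_eq_prod_range]
    rw [sum_comm, sum_mul, sum_div]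
    refine sum_congr rfl fun k _ ↦ ?_
    rw [← mul_sum, ← succ_mul_sum_range_descFactorial]
    push_cast
    field_simp
  have hsum := hasSum_sum fun k (_ : k ∈ range (p + 1)) ↦
    (Real.hasSum_succ_descFactorial_succ_mul_pow_div_factorial k x).mul_left (S p k / (k + 1))
  rw [tsum_congr hpartial, hsum.tsum_eq, mul_sum]
  refine sum_congr rfl fun k _ ↦ ?_
  field_simp
  ring
end

section
/- For n, k ≥ 1 with n ≥ k, the degenerate r-Stirling numbers of the second kind satisfy the recurrence {n+1+r brace k+r}_{r,λ} = {n+r brace k-1+r}_{r,λ} + (k + r - nλ) {n+r brace k+r}_{r,λ}. -/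
open Finset Polynomial

section FallingFactorialExpansion

variable {R : Type*} [CommRing R]

theorem sub_mul_descPochhammer_eval (c x : R) (j : ℕ) :
    (x - c) * (descPochhammer R j).eval x =
      (descPochhammer R (j + 1)).eval x + (j - c) * (descPochhammer R j).eval x := by
  rw [descPochhammer_succ_eval]
  ring

theorem sub_mul_sum_descPochhammer_eval (a : ℕ → R) (c x : R) (N : ℕ) :
    (x - c) * ∑ j ∈ range N, a j * (descPochhammer R j).eval x =
      ∑ j ∈ range (N + 1),
        ((if j = 0 then 0 else a (j - 1)) + if j < N then (j - c) * a j else 0) *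
          (descPochhammer R j).eval x := by
  simp only [add_mul, sum_add_distrib, ite_mul, zero_mul]
  rw [sum_range_succ', sum_range_succ, if_neg (lt_irrefl N)]
  simp only [Nat.add_one_ne_zero, if_false, Nat.add_sub_cancel, if_true, add_zero]
  rw [mul_sum, ← sum_add_distrib]
  refine sum_congr rfl fun j hj => ?_
  rw [if_pos (mem_range.mp hj), mul_left_comm, sub_mul_descPochhammer_eval]
  ring

theorem descPochhammer_eval_natCast_self_ne_zero [CharZero R] (k : ℕ) :
    (descPochhammer R k).eval (k : R) ≠ 0 := by
  rw [descPochhammer_eval_eq_descFactorial, Nat.descFactorial_self]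
  exact_mod_cast k.factorial_ne_zero

theorem eq_of_forall_sum_descPochhammer_eval_eq [IsDomain R] [CharZero R] {N : ℕ} {a b : ℕ → R}
    (h : ∀ x, ∑ j ∈ range N, a j * (descPochhammer R j).eval x =
      ∑ j ∈ range N, b j * (descPochhammer R j).eval x) :
    ∀ k < N, a k = b k := by
  intro k
  induction k using Nat.strong_induction_on with
  | _ k ih =>
    intro hk
    have hdiff : ∑ j ∈ range N, (a j - b j) * (descPochhammer R j).eval (k : R) = 0 := by
      simp only [sub_mul, sum_sub_distrib, h, sub_self]
    rw [sum_eq_single_of_mem k (mem_range.mpr hk)] at hdiff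
    · exact sub_eq_zero.mp <|
        (mul_eq_zero.mp hdiff).resolve_right (descPochhammer_eval_natCast_self_ne_zero k)
    · intro j hj hjk
      rcases lt_or_gt_of_ne hjk with hlt | hgt
      · rw [ih j hlt (hlt.trans hk), sub_self, zero_mul]
      · rw [descPochhammer_eval_coe_nat_of_lt hgt, mul_zero]

end FallingFactorialExpansion

theorem degFallFact_succ (y l : ℝ) (m : ℕ) :
    degFallFact y l (m + 1) = (y - m * l) * degFallFact y l m := by
  rw [degFallFact, prod_range_succ, mul_comm]
  rfl

/-- for `n ≥ k ≥ 1`,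
`{n+1+r brace k+r}_{r,λ} = {n+r brace k-1+r}_{r,λ} + (k+r-nλ) {n+r brace k+r}_{r,λ}`. -/
theorem degStirling_recurrence (l : ℝ) (r : ℕ) (S : ℕ → ℕ → ℝ)
    (hS : ∀ (m : ℕ) (x : ℝ), degFallFact (x + r) l m =
      ∑ k ∈ Finset.range (m + 1), S m k * ∏ i ∈ Finset.range k, (x - i))
    (n k : ℕ) (hk : 1 ≤ k) (hnk : k ≤ n) :
    S (n + 1) k = S n (k - 1) + ((k : ℝ) + r - n * l) * S n k := by
  have hexp : ∀ m x, degFallFact (x + r) l m =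
      ∑ j ∈ range (m + 1), S m j * (descPochhammer ℝ j).eval x := by
    simpa only [descPochhammer_eval_eq_prod_range] using hS
  have hcoeff := eq_of_forall_sum_descPochhammer_eval_eq (N := n + 2) (a := S (n + 1))
    (b := fun j => (if j = 0 then 0 else S n (j - 1)) +
      if j < n + 1 then (j - (n * l - r)) * S n j else 0)
    (fun x => by
      rw [← hexp, degFallFact_succ, hexp, show x + r - n * l = x - (n * l - r) by ring,
        sub_mul_sum_descPochhammer_eval]) k (by omega)
  rw [hcoeff, if_neg (by omega), if_pos (by omega)]
  ring
end

section
/- For p ≥ 0 and |x| < 1, ∑_{l=0}^∞ (l+r)_{p,λ} x^l = (1/(1-x)) F_{p,λ}( x/(1-x) | r ), where F_{p,λ}(y|r) = ∑_{k=0}^p k! {p+r brace k+r}_{r,λ} y^k. -/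
open Finset Nat

theorem prod_range_natCast_sub_eq_descFactorial {R : Type*} [CommRing R] (n k : ℕ) :
    ∏ j ∈ range k, ((n : R) - j) = n.descFactorial k := by
  rw [← descPochhammer_eval_eq_prod_range, descPochhammer_eval_eq_descFactorial]

theorem hasSum_descFactorial_mul_geometric {𝕜 : Type*} [NormedDivisionRing 𝕜] (k : ℕ) {r : 𝕜}
    (hr : ‖r‖ < 1) :
    HasSum (fun n : ℕ => (n.descFactorial k : 𝕜) * r ^ n) (k ! * r ^ k / (1 - r) ^ (k + 1)) := by
  have hvanish : ∑ i ∈ range k, (i.descFactorial k : 𝕜) * r ^ i = 0 :=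
    sum_eq_zero fun i hi => by simp [descFactorial_eq_zero_iff_lt.2 (mem_range.1 hi)]
  have hshift (n : ℕ) : ((n + k).descFactorial k : 𝕜) * r ^ (n + k) =
      k ! * r ^ k * ((n + k).choose k * r ^ n) := by
    rw [descFactorial_eq_factorial_mul_choose, cast_mul, pow_add, mul_assoc, mul_assoc,
      ← mul_assoc _ (r ^ n), ((Nat.cast_commute _ _).mul_left (Commute.pow_pow_self r n k)).eq]
  have h := (hasSum_choose_mul_geometric_of_norm_lt_one k hr).mul_left ((k ! : 𝕜) * r ^ k)
  rw [← div_eq_mul_one_div] at h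
  rw [← hasSum_nat_add_iff' k, hvanish, sub_zero]
  simpa only [hshift] using h

/-- for `|x| < 1`,
`∑_{l≥0} (l+r)_{p,λ} x^l = (1/(1-x)) F_{p,λ}(x/(1-x) | r)`, where
`F_{p,λ}(y|r) = ∑_{k=0}^p k! {p+r brace k+r}_{r,λ} y^k`. -/
theorem tsum_degFallFact_eq_fubini (l : ℝ) (p r : ℕ) (S : ℕ → ℕ → ℝ)
    (hS : ∀ (m : ℕ) (x : ℝ), degFallFact (x + r) l m =
      ∑ k ∈ Finset.range (m + 1), S m k * ∏ i ∈ Finset.range k, (x - i))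
    (x : ℝ) (hx : |x| < 1) :
    HasSum (fun n : ℕ => degFallFact (n + r) l p * x ^ n)
      ((1 / (1 - x)) * ∑ k ∈ Finset.range (p + 1),
        (k.factorial : ℝ) * S p k * (x / (1 - x)) ^ k) := by
  have hx1 : 1 - x ≠ 0 := (sub_pos.2 (lt_of_le_of_lt (le_abs_self x) hx)).ne'
  have hxnorm : ‖x‖ < 1 := by rwa [Real.norm_eq_abs]
  have hterm (n : ℕ) : degFallFact (n + r) l p * x ^ n =
      ∑ k ∈ range (p + 1), S p k * ((n.descFactorial k : ℝ) * x ^ n) := by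
    rw [hS, sum_mul]
    refine sum_congr rfl fun k _ => ?_
    rw [prod_range_natCast_sub_eq_descFactorial, mul_assoc]
  have hsum := hasSum_sum fun k (_ : k ∈ range (p + 1)) =>
    (hasSum_descFactorial_mul_geometric k hxnorm).mul_left (S p k)
  have hvalue : ∑ k ∈ range (p + 1), S p k * (k ! * x ^ k / (1 - x) ^ (k + 1)) =
      1 / (1 - x) * ∑ k ∈ range (p + 1), (k ! : ℝ) * S p k * (x / (1 - x)) ^ k := by
    rw [mul_sum]
    refine sum_congr rfl fun k _ => ?_
    rw [div_pow, pow_succ]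
    field_simp
  simpa only [← hterm, hvalue] using hsum
end

section
/- For p ≥ 0 and |x| < 1, ∑_{n=0}^∞ ( ∑_{j=0}^n (j+r)_{p,λ} ) x^n = (1/(1-x)^2) F_{p,λ}( x/(1-x) | r ). -/
/-!
Evaluating `(x + r)_{p,λ} = ∑ₖ S(p,k) (x)_k` at `x = j ∈ ℕ` gives
`(j + r)_{p,λ} = ∑ₖ S(p,k) k! C(j,k)`, so by the hockey-stick identity the partial sum
`∑_{j ≤ n} (j + r)_{p,λ}` equals `∑ₖ S(p,k) k! C(n+1,k+1)`. Each of the finitely many series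
`∑ₙ C(n+1,k+1) xⁿ = xᵏ / (1-x)^(k+2)` is a negative binomial series.
-/

open Finset

theorem Nat.sum_range_choose_eq_choose_succ (n k : ℕ) :
    ∑ j ∈ range (n + 1), j.choose k = (n + 1).choose (k + 1) := by
  induction n with
  | zero => simp [Nat.choose_succ_succ']
  | succ n ih => rw [sum_range_succ, ih, Nat.choose_succ_succ' (n + 1), add_comm]

theorem sum_range_natCast_eq_sum_choose_of_eq_sum_prod_sub {R : Type*} [CommRing R]
    {f : R → R} {s : ℕ → R} {p : ℕ}
    (hf : ∀ x, f x = ∑ k ∈ range (p + 1), s k * ∏ i ∈ range k, (x - i)) (n : ℕ) :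
    ∑ j ∈ range (n + 1), f j =
      ∑ k ∈ range (p + 1), s k * k.factorial * ((n + 1).choose (k + 1) : R) := by
  have hfj (j : ℕ) : f j = ∑ k ∈ range (p + 1), s k * k.factorial * (j.choose k : R) := by
    rw [hf]
    refine sum_congr rfl fun k _ => ?_
    rw [prod_range_natCast_sub, ← Nat.descFactorial_eq_prod_range,
      Nat.descFactorial_eq_factorial_mul_choose, Nat.cast_mul, mul_assoc]
  simp only [hfj]
  rw [sum_comm]
  refine sum_congr rfl fun k _ => ?_
  rw [← mul_sum, ← Nat.cast_sum, Nat.sum_range_choose_eq_choose_succ]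

theorem hasSum_choose_succ_mul_pow {𝕜 : Type*} [NormedField 𝕜] [HasSummableGeomSeries 𝕜]
    {x : 𝕜} (hx : ‖x‖ < 1) (k : ℕ) :
    HasSum (fun n : ℕ => ((n + 1).choose (k + 1) : 𝕜) * x ^ n) (x ^ k / (1 - x) ^ (k + 2)) := by
  rw [← hasSum_nat_add_iff' k]
  have hinitial : ∑ i ∈ range k, ((i + 1).choose (k + 1) : 𝕜) * x ^ i = 0 :=
    sum_eq_zero fun i hi => by
      rw [Nat.choose_eq_zero_of_lt (by simpa using hi), Nat.cast_zero, zero_mul]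
  rw [hinitial, sub_zero]
  have hterm (n : ℕ) : ((n + k + 1).choose (k + 1) : 𝕜) * x ^ (n + k) =
      ((n + (k + 1)).choose (k + 1) : 𝕜) * x ^ n * x ^ k := by
    rw [pow_add, ← add_assoc, mul_assoc]
  rw [funext hterm, show x ^ k / (1 - x) ^ (k + 2) = 1 / (1 - x) ^ (k + 1 + 1) * x ^ k by ring]
  exact (hasSum_choose_mul_geometric_of_norm_lt_one (k + 1) hx).mul_right (x ^ k)

/-- for `|x| < 1`,
`∑_{n≥0} (∑_{j=0}^n (j+r)_{p,λ}) x^n = (1/(1-x)^2) F_{p,λ}(x/(1-x) | r)`. -/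
theorem tsum_partial_sums_eq_fubini (l : ℝ) (p r : ℕ) (S : ℕ → ℕ → ℝ)
    (hS : ∀ (m : ℕ) (x : ℝ), degFallFact (x + r) l m =
      ∑ k ∈ Finset.range (m + 1), S m k * ∏ i ∈ Finset.range k, (x - i))
    (x : ℝ) (hx : |x| < 1) :
    HasSum (fun n : ℕ => (∑ j ∈ Finset.range (n + 1), degFallFact (j + r) l p) * x ^ n)
      ((1 / (1 - x) ^ 2) * ∑ k ∈ Finset.range (p + 1),
        (k.factorial : ℝ) * S p k * (x / (1 - x)) ^ k) := by
  have hx_norm : ‖x‖ < 1 := by rwa [Real.norm_eq_abs]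
  have hx1 : 1 - x ≠ 0 := by linarith [le_abs_self x]
  have hpartial := sum_range_natCast_eq_sum_choose_of_eq_sum_prod_sub
    (f := fun y => degFallFact (y + r) l p) (hS p)
  have hterms (n : ℕ) : (∑ j ∈ range (n + 1), degFallFact (j + r) l p) * x ^ n =
      ∑ k ∈ range (p + 1), S p k * k.factorial * ((n + 1).choose (k + 1) * x ^ n) := by
    rw [hpartial, sum_mul]
    exact sum_congr rfl fun k _ => by ring
  have hvalue :
      1 / (1 - x) ^ 2 * ∑ k ∈ range (p + 1), (k.factorial : ℝ) * S p k * (x / (1 - x)) ^ k =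
      ∑ k ∈ range (p + 1), S p k * k.factorial * (x ^ k / (1 - x) ^ (k + 2)) := by
    rw [mul_sum]
    refine sum_congr rfl fun k _ => ?_
    rw [div_pow, pow_add]
    field_simp
  rw [funext hterms, hvalue]
  exact hasSum_sum fun k _ => (hasSum_choose_succ_mul_pow hx_norm k).mul_left (S p k * k.factorial)
end
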